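/- Let ν > 0 and fix λ > 0. Then limsup_{t→∞} t^{min(2ν, ν+1)} K_2(t;λ) ≤ 2/(ν λ^ν). -/

import Mathlib

open Filter

/-- `K₂(t;λ) = ∫_λ^t u^{-(ν+1)} (t+λ−u)^{-min(2ν, ν+1)} du`. -/
noncomputable def K₂ (ν t lam : ℝ) : ℝ :=
  ∫ u in lam..t, u ^ (-(ν + 1)) * (t + lam - u) ^ (-(min (2 * ν) (ν + 1)))

/-!
Reflecting `u ↦ t + λ - u` maps `[λ, t]` to itself and swaps the two factors of the integrand;
since `m := min (2ν) (ν + 1) ≤ ν + 1`, the reflected integrand is the smaller one on the left half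
`[λ, (t + λ)/2]`. Hence `t^m K₂(t;λ) ≤ 2 ∫_λ^{(t+λ)/2} u^{-(ν+1)} (t/(t+λ-u))^m du`. On that half
`t/(t+λ-u) ≤ 2`, so by dominated convergence the right side tends to
`2 ∫_λ^∞ u^{-(ν+1)} du = 2/(ν λ^ν)`.
-/

open MeasureTheory Set Real Topology

theorem integral_le_two_mul_integral_half_of_reflect_le {f : ℝ → ℝ} {a c : ℝ} (ha : a ≤ c / 2)
    (hf : IntervalIntegrable f volume a (c - a))
    (hreflect_le : ∀ u ∈ Icc a (c / 2), f (c - u) ≤ f u) :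
    ∫ u in a..c - a, f u ≤ 2 * ∫ u in a..c / 2, f u := by
  have hmid : c / 2 ∈ uIcc a (c - a) := by rw [uIcc_of_le (by linarith)]; constructor <;> linarith
  have hleft : IntervalIntegrable f volume a (c / 2) := hf.mono_set (uIcc_subset_uIcc_left hmid)
  have hright : IntervalIntegrable f volume (c / 2) (c - a) :=
    hf.mono_set (uIcc_subset_uIcc_right hmid)
  have hreflect : ∫ u in c / 2..c - a, f u = ∫ u in a..c / 2, f (c - u) := by
    rw [intervalIntegral.integral_comp_sub_left f c]; ring_nf
  have hreflect_int : IntervalIntegrable (fun u => f (c - u)) volume a (c / 2) := by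
    have h := hright.symm.comp_sub_left c
    rwa [sub_sub_cancel, show c - c / 2 = c / 2 by ring] at h
  calc ∫ u in a..c - a, f u = (∫ u in a..c / 2, f u) + ∫ u in a..c / 2, f (c - u) := by
        rw [← intervalIntegral.integral_add_adjacent_intervals hleft hright, hreflect]
    _ ≤ (∫ u in a..c / 2, f u) + ∫ u in a..c / 2, f u := by
        gcongr
        exact intervalIntegral.integral_mono_on ha hreflect_int hleft hreflect_le
    _ = 2 * ∫ u in a..c / 2, f u := by ring

theorem rpow_neg_mul_rpow_neg_le_of_le {x y p q : ℝ} (hx : 0 < x) (hxy : x ≤ y) (hqp : q ≤ p) :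
    y ^ (-p) * x ^ (-q) ≤ x ^ (-p) * y ^ (-q) := by
  have hy : 0 < y := hx.trans_le hxy
  calc y ^ (-p) * x ^ (-q) = y ^ (-(p - q)) * y ^ (-q) * x ^ (-q) := by
        rw [← rpow_add hy]; ring_nf
    _ ≤ x ^ (-(p - q)) * y ^ (-q) * x ^ (-q) := by
        have : y ^ (-(p - q)) ≤ x ^ (-(p - q)) := rpow_le_rpow_of_nonpos hx hxy (by linarith)
        gcongr
    _ = x ^ (-p) * y ^ (-q) := by
        rw [mul_right_comm, ← rpow_add hx]; ring_nf

theorem continuousOn_rpow_mul_sub_rpow {a b c p q : ℝ} (ha : 0 < a) (hbc : b < c) :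
    ContinuousOn (fun u : ℝ => u ^ p * (c - u) ^ q) (Icc a b) := by
  refine ContinuousOn.mul ?_ ?_
  · exact continuousOn_id.rpow_const fun u hu => Or.inl (ha.trans_le hu.1).ne'
  · exact (continuousOn_const.sub continuousOn_id).rpow_const
      fun u hu => Or.inl (sub_pos.2 (hu.2.trans_lt hbc)).ne'

theorem rpow_mul_integral_le_two_mul_integral_half {lam t p q : ℝ} (hlam : 0 < lam)
    (ht : lam ≤ t) (hqp : q ≤ p) :
    t ^ q * ∫ u in lam..t, u ^ (-p) * (t + lam - u) ^ (-q) ≤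
      2 * ∫ u in lam..(t + lam) / 2, u ^ (-p) * (t / (t + lam - u)) ^ q := by
  have hint : IntervalIntegrable (fun u => u ^ (-p) * (t + lam - u) ^ (-q)) volume lam
      (t + lam - lam) := by
    rw [add_sub_cancel_right]
    exact (continuousOn_rpow_mul_sub_rpow hlam (by linarith)).intervalIntegrable_of_Icc ht
  have hreflect_le : ∀ u ∈ Icc lam ((t + lam) / 2),
      (t + lam - u) ^ (-p) * (t + lam - (t + lam - u)) ^ (-q) ≤
        u ^ (-p) * (t + lam - u) ^ (-q) := fun u hu => by
    rw [sub_sub_cancel]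
    exact rpow_neg_mul_rpow_neg_le_of_le (hlam.trans_le hu.1) (by linarith [hu.2]) hqp
  have hhalf := integral_le_two_mul_integral_half_of_reflect_le (by linarith) hint hreflect_le
  rw [add_sub_cancel_right] at hhalf
  have hscale : ∀ u ∈ uIcc lam ((t + lam) / 2),
      t ^ q * (u ^ (-p) * (t + lam - u) ^ (-q)) = u ^ (-p) * (t / (t + lam - u)) ^ q := by
    intro u hu
    rw [uIcc_of_le (by linarith)] at hu
    have hcu : 0 ≤ t + lam - u := by linarith [hu.2]
    rw [div_rpow (by linarith) hcu, rpow_neg hcu]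
    ring
  calc t ^ q * ∫ u in lam..t, u ^ (-p) * (t + lam - u) ^ (-q)
      ≤ t ^ q * (2 * ∫ u in lam..(t + lam) / 2, u ^ (-p) * (t + lam - u) ^ (-q)) := by
        gcongr
        exact rpow_nonneg (by linarith) q
    _ = 2 * ∫ u in lam..(t + lam) / 2, t ^ q * (u ^ (-p) * (t + lam - u) ^ (-q)) := by
        rw [intervalIntegral.integral_const_mul]; ring
    _ = 2 * ∫ u in lam..(t + lam) / 2, u ^ (-p) * (t / (t + lam - u)) ^ q := by
        rw [intervalIntegral.integral_congr hscale]

theorem tendsto_div_add_const_atTop (b : ℝ) : Tendsto (fun t : ℝ => t / (t + b)) atTop (𝓝 1) := by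
  have h : Tendsto (fun t : ℝ => (1 + b * t⁻¹)⁻¹) atTop (𝓝 1) := by
    simpa using (tendsto_const_nhds.add (tendsto_inv_atTop_zero.const_mul b)).inv₀
      (by simp : (1 : ℝ) + b * 0 ≠ 0)
  refine h.congr' ?_
  filter_upwards [eventually_gt_atTop 0] with t ht
  field_simp

theorem tendsto_integral_rpow_mul_div_rpow {lam p q : ℝ} (hlam : 0 < lam) (hp : 1 < p)
    (hq : 0 ≤ q) :
    Tendsto (fun t => ∫ u in lam..(t + lam) / 2, u ^ (-p) * (t / (t + lam - u)) ^ q) atTop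
      (𝓝 (∫ u in Ioi lam, u ^ (-p))) := by
  set F : ℝ → ℝ → ℝ := fun t =>
    (Iic ((t + lam) / 2)).indicator fun u => u ^ (-p) * (t / (t + lam - u)) ^ q
  have hrepr : (fun t => ∫ u in Ioi lam, F t u) =ᶠ[atTop]
      fun t => ∫ u in lam..(t + lam) / 2, u ^ (-p) * (t / (t + lam - u)) ^ q := by
    filter_upwards [eventually_ge_atTop lam] with t ht
    rw [intervalIntegral.integral_of_le (by linarith), setIntegral_indicator measurableSet_Iic,
      Ioi_inter_Iic]
  refine Tendsto.congr' hrepr (tendsto_integral_filter_of_dominated_convergence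
    (fun u => 2 ^ q * u ^ (-p)) ?_ ?_ ?_ ?_)
  · refine Eventually.of_forall fun t => ?_
    exact (Measurable.indicator (by fun_prop) measurableSet_Iic).aestronglyMeasurable
  · filter_upwards [eventually_ge_atTop 0] with t ht
    refine ae_restrict_of_forall_mem measurableSet_Ioi fun u hu => ?_
    have hu0 : 0 ≤ u ^ (-p) := rpow_nonneg (hlam.trans hu).le _
    simp only [F]
    by_cases hut : u ∈ Iic ((t + lam) / 2)
    · have hcu : (t + lam) / 2 ≤ t + lam - u := by linarith [mem_Iic.1 hut]
      have hratio : t / (t + lam - u) ≤ 2 := by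
        rw [div_le_iff₀ (by linarith)]; linarith
      have hratio0 : 0 ≤ t / (t + lam - u) := div_nonneg ht (by linarith)
      rw [indicator_of_mem hut, Real.norm_of_nonneg (mul_nonneg hu0 (rpow_nonneg hratio0 _)),
        mul_comm (2 ^ q)]
      gcongr
    · rw [indicator_of_notMem hut, norm_zero]
      positivity
  · exact (integrableOn_Ioi_rpow_of_lt (by linarith) hlam).const_mul _
  · refine Eventually.of_forall fun u => ?_
    have hlim : Tendsto (fun t => u ^ (-p) * (t / (t + lam - u)) ^ q) atTop
        (𝓝 (u ^ (-p))) := by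
      simpa [add_sub_assoc] using
        ((tendsto_div_add_const_atTop (lam - u)).rpow_const (Or.inl one_ne_zero)).const_mul
          (u ^ (-p))
    refine hlim.congr' ?_
    filter_upwards [eventually_ge_atTop (2 * u)] with t ht
    simp only [F]
    rw [indicator_of_mem (mem_Iic.2 (by linarith))]

theorem integral_Ioi_rpow_neg_add_one {ν lam : ℝ} (hν : 0 < ν) (hlam : 0 < lam) :
    ∫ u in Ioi lam, u ^ (-(ν + 1)) = 1 / (ν * lam ^ ν) := by
  rw [integral_Ioi_rpow_of_lt (by linarith) hlam, show -(ν + 1) + 1 = -ν by ring,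
    rpow_neg hlam.le, neg_div_neg_eq, div_eq_div_iff (by linarith) (by positivity)]
  field_simp

theorem stmt_18 (ν lam : ℝ) (hν : 0 < ν) (hlam : 0 < lam) :
    limsup (fun t : ℝ => t ^ (min (2 * ν) (ν + 1)) * K₂ ν t lam) atTop ≤
      2 / (ν * lam ^ ν) := by
  set m := min (2 * ν) (ν + 1)
  set J := fun t => ∫ u in lam..(t + lam) / 2, u ^ (-(ν + 1)) * (t / (t + lam - u)) ^ m
  have hJ : Tendsto (fun t => 2 * J t) atTop (𝓝 (2 / (ν * lam ^ ν))) := by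
    have h := (tendsto_integral_rpow_mul_div_rpow hlam (by linarith : 1 < ν + 1)
      (le_min (by linarith) (by linarith) : 0 ≤ m)).const_mul 2
    rwa [integral_Ioi_rpow_neg_add_one hν hlam, mul_one_div] at h
  have hbound : ∀ᶠ t in atTop, t ^ m * K₂ ν t lam ≤ 2 * J t := by
    filter_upwards [eventually_ge_atTop lam] with t ht
    exact rpow_mul_integral_le_two_mul_integral_half hlam ht (min_le_right _ _)
  have hnonneg : ∀ᶠ t in atTop, 0 ≤ t ^ m * K₂ ν t lam := by
    filter_upwards [eventually_ge_atTop lam] with t ht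
    refine mul_nonneg (rpow_nonneg (by linarith) _) ?_
    refine intervalIntegral.integral_nonneg ht fun u hu => ?_
    exact mul_nonneg (rpow_nonneg (by linarith [hu.1]) _) (rpow_nonneg (by linarith [hu.2]) _)
  calc limsup (fun t => t ^ m * K₂ ν t lam) atTop ≤ limsup (fun t => 2 * J t) atTop :=
        limsup_le_limsup hbound (isCoboundedUnder_le_of_eventually_le _ hnonneg)
          hJ.isBoundedUnder_le
    _ = 2 / (ν * lam ^ ν) := hJ.limsup_eq
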